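/- Let X be a real n×p matrix with rank(X) = p and β₀ ∈ ℝᵖ. On a probability space, let S : Ω → ℝ^{r×n} (p ≤ r ≤ n) be a random matrix with rank(S(ω)X) = p almost surely, let Y(ω) be the Moore–Penrose inverse of S(ω)X, set P(ω) = XY(ω)S(ω) and P_X = X(XᵀX)⁻¹Xᵀ, and let ε : Ω → ℝⁿ be independent of S with E[ε_i] = 0 and E[ε_iε_j] = σ²δ_{ij} (σ > 0); assume square-integrability of all relevant entries. Set y = Xβ₀ + ε, ỹ = Py, and ŷ = P_X y. Then the total predictive risk satisfies Risk(ỹ, Xβ₀) := E[‖ỹ − Xβ₀‖₂²] = E[‖ŷ − Xβ₀‖₂²] + σ²·trace(E[PPᵀ] − P_X), and consequently Risk(ỹ, Xβ₀) ≥ Risk(ŷ, Xβ₀) = σ²·p. -/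

import Mathlib

/-!
Since `rank (S X) = p` almost surely, the Penrose equations force `Y = ((S X)ᵀ S X)⁻¹ (S X)ᵀ`;
hence `P X = X`, and `P` is almost surely a measurable function of `S`, so independent of `ε`.
The residual `ỹ - X β₀` is then `P ε`, and independence together with `E[ε εᵀ] = σ² I` gives
`E ‖P ε‖² = σ² E tr (P Pᵀ)`; for the constant projector `P_X` this is `σ² tr P_X = σ² p`.
The inequality is `tr (P Pᵀ) = tr P_X + ‖P - P_X‖_F² ≥ p`, which holds because `P P_X = P_X`.
-/

open Matrix MeasureTheory ProbabilityTheory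

namespace Matrix

section HatMatrix

variable {m n R : Type*} [Fintype m] [Fintype n] [DecidableEq n] [CommRing R]

noncomputable def hatMatrix (X : Matrix m n R) : Matrix m m R := X * (Xᵀ * X)⁻¹ * Xᵀ

theorem transpose_hatMatrix (X : Matrix m n R) : (hatMatrix X)ᵀ = hatMatrix X := by
  simp only [hatMatrix, transpose_mul, transpose_transpose, transpose_nonsing_inv, Matrix.mul_assoc]

variable {X : Matrix m n R} (hX : IsUnit (Xᵀ * X).det)
include hX

theorem hatMatrix_mul_self : hatMatrix X * X = X := by
  rw [hatMatrix, Matrix.mul_assoc, Matrix.mul_assoc, nonsing_inv_mul _ hX, Matrix.mul_one]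

theorem hatMatrix_mul_hatMatrix : hatMatrix X * hatMatrix X = hatMatrix X := by
  conv_lhs => arg 2; rw [hatMatrix]
  rw [← Matrix.mul_assoc, ← Matrix.mul_assoc, hatMatrix_mul_self hX]
  rfl

theorem trace_hatMatrix : (hatMatrix X).trace = Fintype.card n := by
  rw [hatMatrix, trace_mul_comm, ← Matrix.mul_assoc, mul_nonsing_inv _ hX, trace_one]

end HatMatrix

theorem isUnit_of_rank_eq_card {n K : Type*} [Fintype n] [DecidableEq n] [Field K]
    {A : Matrix n n K} (hA : A.rank = Fintype.card n) : IsUnit A := by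
  rw [← mulVec_surjective_iff_isUnit]
  have hfull : Module.finrank K (LinearMap.range A.mulVecLin) = Module.finrank K (n → K) := by
    rw [Module.finrank_fintype_fun_eq_card]
    exact hA
  exact LinearMap.range_eq_top.mp (Submodule.eq_top_of_finrank_eq hfull)

section OrderedField

variable {m n R : Type*} [Fintype m] [Fintype n] [Field R] [LinearOrder R] [IsStrictOrderedRing R]

theorem trace_le_trace_mul_transpose_of_mul_eq {H Q : Matrix m m R} (hHT : Hᵀ = H)
    (hHH : H * H = H) (hQH : Q * H = H) : H.trace ≤ (Q * Qᵀ).trace := by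
  have hnonneg : 0 ≤ ((Q - H) * (Q - H)ᵀ).trace := by
    simp only [trace, diag, mul_apply, transpose_apply]
    exact Finset.sum_nonneg fun i _ => Finset.sum_nonneg fun j _ => mul_self_nonneg _
  have hHQ : H * Qᵀ = H := by rw [← hHT, ← transpose_mul, hQH]
  rw [transpose_sub, Matrix.mul_sub, Matrix.sub_mul, Matrix.sub_mul, hHT, hQH, hHQ, hHH,
    trace_sub, trace_sub, trace_sub] at hnonneg
  linarith

variable [DecidableEq n]

theorem card_le_trace_mul_transpose_of_mul_eq {X : Matrix m n R} {Q : Matrix m m R}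
    (hX : IsUnit (Xᵀ * X).det) (hQX : Q * X = X) : (Fintype.card n : R) ≤ (Q * Qᵀ).trace := by
  have hQH : Q * hatMatrix X = hatMatrix X := by
    rw [hatMatrix, ← Matrix.mul_assoc, ← Matrix.mul_assoc, hQX]
  rw [← trace_hatMatrix hX]
  exact trace_le_trace_mul_transpose_of_mul_eq (transpose_hatMatrix X)
    (hatMatrix_mul_hatMatrix hX) hQH

theorem isUnit_det_transpose_mul_self {A : Matrix m n R} (hA : A.rank = Fintype.card n) :
    IsUnit (Aᵀ * A).det :=
  (isUnit_iff_isUnit_det _).mp (isUnit_of_rank_eq_card (by rw [rank_transpose_mul_self, hA]))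

theorem eq_inv_transpose_mul_self_mul_transpose {A : Matrix m n R} {Y : Matrix n m R}
    (hA : A.rank = Fintype.card n) (h₁ : A * Y * A = A) (h₃ : (A * Y)ᵀ = A * Y) :
    Y = (Aᵀ * A)⁻¹ * Aᵀ := by
  have hnormal : Aᵀ * A * Y = Aᵀ := by
    rw [Matrix.mul_assoc, ← h₃, ← transpose_mul, h₁]
  calc Y = (Aᵀ * A)⁻¹ * (Aᵀ * A * Y) :=
        (nonsing_inv_mul_cancel_left (Aᵀ * A) Y (isUnit_det_transpose_mul_self hA)).symm
    _ = (Aᵀ * A)⁻¹ * Aᵀ := by rw [hnormal]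

theorem mul_eq_one_of_mul_mul_eq {A : Matrix m n R} {Y : Matrix n m R}
    (hA : A.rank = Fintype.card n) (h₁ : A * Y * A = A) (h₃ : (A * Y)ᵀ = A * Y) :
    Y * A = 1 := by
  rw [eq_inv_transpose_mul_self_mul_transpose hA h₁ h₃, Matrix.mul_assoc,
    nonsing_inv_mul _ (isUnit_det_transpose_mul_self hA)]

end OrderedField

end Matrix

theorem measurable_mul_inv_mul_apply {T l m k : Type*} [TopologicalSpace T] [MeasurableSpace T]
    [OpensMeasurableSpace T] [Fintype m] [DecidableEq m]
    {F : T → Matrix l m ℝ} {A : T → Matrix m m ℝ} {G : T → Matrix m k ℝ}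
    (hF : Continuous F) (hA : Continuous A) (hG : Continuous G) (i : l) (j : k) :
    Measurable fun t => (F t * (A t)⁻¹ * G t) i j := by
  have hadj : ∀ t, F t * (A t)⁻¹ * G t = (A t).det⁻¹ • (F t * (A t).adjugate * G t) := fun t => by
    rw [inv_def, Ring.inverse_eq_inv', Matrix.mul_smul, Matrix.smul_mul]
  simp only [hadj, Matrix.smul_apply, smul_eq_mul]
  exact (measurable_inv.comp hA.matrix_det.measurable).mul
    (((hF.matrix_mul hA.matrix_adjugate).matrix_mul hG).matrix_elem i j).measurable

theorem indepFun_mul_mul_of_penrose {Ω E n k r : Type*} [MeasurableSpace Ω] {μ : Measure Ω}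
    [MeasurableSpace E] [Fintype n] [Fintype k] [DecidableEq k] [Fintype r]
    {Z : Ω → E} {X : Matrix n k ℝ} {S : Ω → Matrix r n ℝ} {Y : Ω → Matrix k r ℝ}
    (hindep : IndepFun Z (fun ω i j => S ω i j) μ)
    (hrank : ∀ᵐ ω ∂μ, (S ω * X).rank = Fintype.card k)
    (h₁ : ∀ ω, S ω * X * Y ω * (S ω * X) = S ω * X)
    (h₃ : ∀ ω, (S ω * X * Y ω)ᵀ = S ω * X * Y ω) :
    IndepFun Z (fun ω i j => (X * Y ω * S ω) i j) μ := by
  have hmeas : Measurable fun (M : r → n → ℝ) (i j : n) =>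
      (X * ((of M * X)ᵀ * (of M * X))⁻¹ * ((of M * X)ᵀ * of M)) i j := by
    have hM : Continuous fun M : r → n → ℝ => of M := continuous_id
    have hMX := hM.matrix_mul (continuous_const (y := X))
    exact measurable_pi_lambda _ fun i => measurable_pi_lambda _ fun j =>
      measurable_mul_inv_mul_apply continuous_const
        (hMX.matrix_transpose.matrix_mul hMX) (hMX.matrix_transpose.matrix_mul hM) i j
  -- `Y` is given by this formula in terms of `S` only where `S X` has full rank.
  refine (hindep.comp measurable_id hmeas).congr .rfl ?_
  filter_upwards [hrank] with ω hω
  rw [eq_inv_transpose_mul_self_mul_transpose hω (h₁ ω) (h₃ ω)]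
  simp only [Function.comp_apply, Matrix.mul_assoc]
  rfl

section Risk

variable {Ω m n : Type*} [MeasurableSpace Ω] {μ : Measure Ω} [Fintype m] [Fintype n]
  [DecidableEq n] {σ : ℝ} {ε : Ω → n → ℝ}

theorem integral_sum_mulVec_sq_of_indepFun {Q : Ω → Matrix m n ℝ}
    (hindep : IndepFun ε (fun ω i j => Q ω i j) μ)
    (hε : ∀ j, MemLp (fun ω => ε ω j) 2 μ)
    (hεcov : ∀ j k, ∫ ω, ε ω j * ε ω k ∂μ = if j = k then σ ^ 2 else 0)
    (hQ : ∀ i j, MemLp (fun ω => Q ω i j) 2 μ) :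
    ∫ ω, ∑ i, (Q ω *ᵥ ε ω) i ^ 2 ∂μ = σ ^ 2 * ∫ ω, (Q ω * (Q ω)ᵀ).trace ∂μ := by
  set G : Ω → Matrix n n ℝ := fun ω => (Q ω)ᵀ * Q ω
  have hG : ∀ j k, Integrable (fun ω => G ω j k) μ := fun j k => by
    simp only [G, mul_apply, transpose_apply]
    exact integrable_finsetSum _ fun i _ => (hQ i j).integrable_mul (hQ i k)
  have hεε : ∀ j k, Integrable (fun ω => ε ω j * ε ω k) μ := fun j k =>
    (hε j).integrable_mul (hε k)
  have hGε : ∀ j k, IndepFun (fun ω => G ω j k) (fun ω => ε ω j * ε ω k) μ := fun j k =>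
    (hindep.comp (φ := fun v : n → ℝ => v j * v k)
      (ψ := fun M : m → n → ℝ => ∑ i, M i j * M i k) (by fun_prop) (by fun_prop)).symm
  have hexpand : ∀ ω, ∑ i, (Q ω *ᵥ ε ω) i ^ 2 = ∑ j, ∑ k, G ω j k * (ε ω j * ε ω k) := by
    intro ω
    simp only [G, mulVec, dotProduct, mul_apply, transpose_apply, sq, Finset.sum_mul_sum]
    rw [Finset.sum_comm]
    refine Finset.sum_congr rfl fun j _ => ?_
    rw [Finset.sum_comm]
    refine Finset.sum_congr rfl fun k _ => ?_
    rw [Finset.sum_mul]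
    exact Finset.sum_congr rfl fun i _ => by ring
  have hterm : ∀ j k, ∫ ω, G ω j k * (ε ω j * ε ω k) ∂μ
      = (∫ ω, G ω j k ∂μ) * if j = k then σ ^ 2 else 0 := fun j k => by
    rw [← hεcov]
    exact (hGε j k).integral_fun_mul_eq_mul_integral (hG j k).aestronglyMeasurable
      (hεε j k).aestronglyMeasurable
  have hint : ∀ j k, Integrable (fun ω => G ω j k * (ε ω j * ε ω k)) μ := fun j k =>
    (hGε j k).integrable_mul (hG j k) (hεε j k)
  calc ∫ ω, ∑ i, (Q ω *ᵥ ε ω) i ^ 2 ∂μ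
      = ∑ j, ∑ k, ∫ ω, G ω j k * (ε ω j * ε ω k) ∂μ := by
        simp only [hexpand]
        rw [integral_finsetSum _ fun j _ => integrable_finsetSum _ fun k _ => hint j k]
        exact Finset.sum_congr rfl fun j _ => integral_finsetSum _ fun k _ => hint j k
    _ = σ ^ 2 * ∑ j, ∫ ω, G ω j j ∂μ := by
        simp only [hterm, mul_ite, mul_zero, Finset.sum_ite_eq, Finset.mem_univ, if_true,
          Finset.mul_sum]
        exact Finset.sum_congr rfl fun j _ => mul_comm _ _
    _ = σ ^ 2 * ∫ ω, (Q ω * (Q ω)ᵀ).trace ∂μ := by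
        rw [← integral_finsetSum _ fun j _ => hG j j]
        congr 2 with ω
        exact trace_mul_comm (Q ω)ᵀ (Q ω)

theorem integral_sum_sq_mulVec_add_sub_of_mul_eq {k : Type*} [Fintype k]
    {Q : Ω → Matrix n n ℝ} {X : Matrix n k ℝ} (β : k → ℝ) (hQX : ∀ᵐ ω ∂μ, Q ω * X = X)
    (hindep : IndepFun ε (fun ω i j => Q ω i j) μ)
    (hε : ∀ j, MemLp (fun ω => ε ω j) 2 μ)
    (hεcov : ∀ j k, ∫ ω, ε ω j * ε ω k ∂μ = if j = k then σ ^ 2 else 0)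
    (hQ : ∀ i j, MemLp (fun ω => Q ω i j) 2 μ) :
    ∫ ω, ∑ i, ((Q ω *ᵥ (X *ᵥ β + ε ω)) i - (X *ᵥ β) i) ^ 2 ∂μ
      = σ ^ 2 * ∫ ω, (Q ω * (Q ω)ᵀ).trace ∂μ := by
  rw [← integral_sum_mulVec_sq_of_indepFun hindep hε hεcov hQ]
  refine integral_congr_ae ?_
  filter_upwards [hQX] with ω hω
  simp only [mulVec_add, mulVec_mulVec, hω, Pi.add_apply, add_sub_cancel_left]

end Risk

theorem total_predictive_risk_rank_preserved_general
    {n p r : ℕ} (X : Matrix (Fin n) (Fin p) ℝ) (hX : X.rank = p)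
    (PX : Matrix (Fin n) (Fin n) ℝ) (hPX : PX = X * (Xᵀ * X)⁻¹ * Xᵀ)
    {Ω : Type*} [MeasurableSpace Ω] (μ : Measure Ω) [IsProbabilityMeasure μ]
    (S : Ω → Matrix (Fin r) (Fin n) ℝ)
    (Y : Ω → Matrix (Fin p) (Fin r) ℝ)
    (hp1 : ∀ ω, (S ω * X) * Y ω * (S ω * X) = S ω * X)
    (hp3 : ∀ ω, ((S ω * X) * Y ω)ᵀ = (S ω * X) * Y ω)
    (hrank : ∀ᵐ ω ∂μ, (S ω * X).rank = p)
    (P : Ω → Matrix (Fin n) (Fin n) ℝ) (hP : ∀ ω, P ω = X * Y ω * S ω)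
    (β₀ : Fin p → ℝ) (σ : ℝ) (ε : Ω → Fin n → ℝ)
    (hindep : ProbabilityTheory.IndepFun ε
      ((fun ω i j => S ω i j) : Ω → Fin r → Fin n → ℝ) μ)
    (hεL2 : ∀ i, MemLp (fun ω => ε ω i) 2 μ)
    (hεcov : ∀ i j, ∫ ω, ε ω i * ε ω j ∂μ = if i = j then σ ^ 2 else 0)
    (hYSL2 : ∀ i j, MemLp (fun ω => (Y ω * S ω) i j) 2 μ)
    (hPPTint : ∀ i j, Integrable (fun ω => (P ω * (P ω)ᵀ) i j) μ)
    (EPPT : Matrix (Fin n) (Fin n) ℝ)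
    (hEPPT : ∀ i j, EPPT i j = ∫ ω, (P ω * (P ω)ᵀ) i j ∂μ)
    (y : Ω → Fin n → ℝ) (hy : ∀ ω, y ω = X *ᵥ β₀ + ε ω)
    (ytilde : Ω → Fin n → ℝ) (hytilde : ∀ ω, ytilde ω = P ω *ᵥ y ω)
    (yhat : Ω → Fin n → ℝ) (hyhat : ∀ ω, yhat ω = PX *ᵥ y ω) :
    (∫ ω, ∑ i, (ytilde ω i - (X *ᵥ β₀) i) ^ 2 ∂μ) =
      (∫ ω, ∑ i, (yhat ω i - (X *ᵥ β₀) i) ^ 2 ∂μ) +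
        σ ^ 2 * (EPPT - PX).trace ∧
    (∫ ω, ∑ i, (yhat ω i - (X *ᵥ β₀) i) ^ 2 ∂μ) = σ ^ 2 * p ∧
    (∫ ω, ∑ i, (yhat ω i - (X *ᵥ β₀) i) ^ 2 ∂μ) ≤
      ∫ ω, ∑ i, (ytilde ω i - (X *ᵥ β₀) i) ^ 2 ∂μ := by
  obtain rfl : PX = hatMatrix X := hPX
  have hXX : IsUnit (Xᵀ * X).det := isUnit_det_transpose_mul_self (by simpa using hX)
  have hP_fix : ∀ᵐ ω ∂μ, P ω * X = X := by
    filter_upwards [hrank] with ω hω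
    rw [hP, Matrix.mul_assoc, Matrix.mul_assoc,
      mul_eq_one_of_mul_mul_eq (by simpa using hω) (hp1 ω) (hp3 ω), Matrix.mul_one]
  have hP_indep : IndepFun ε (fun ω i j => P ω i j) μ := by
    simpa only [← hP] using indepFun_mul_mul_of_penrose hindep (by simpa using hrank) hp1 hp3
  have hP_L2 : ∀ i j, MemLp (fun ω => P ω i j) 2 μ := fun i j => by
    simp only [hP, Matrix.mul_assoc, mul_apply (M := X)]
    exact memLp_finsetSum _ fun k _ => (hYSL2 k j).const_mul _
  have hrisk_tilde : ∫ ω, ∑ i, (ytilde ω i - (X *ᵥ β₀) i) ^ 2 ∂μ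
      = σ ^ 2 * ∫ ω, (P ω * (P ω)ᵀ).trace ∂μ := by
    simp only [hytilde, hy]
    exact integral_sum_sq_mulVec_add_sub_of_mul_eq β₀ hP_fix hP_indep hεL2 hεcov hP_L2
  have hrisk_hat : ∫ ω, ∑ i, (yhat ω i - (X *ᵥ β₀) i) ^ 2 ∂μ = σ ^ 2 * p := by
    simp only [hyhat, hy]
    rw [integral_sum_sq_mulVec_add_sub_of_mul_eq (Q := fun _ => hatMatrix X) β₀
      (.of_forall fun _ => hatMatrix_mul_self hXX) (indepFun_const_right ε _) hεL2 hεcov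
      (fun i j => memLp_const _), integral_const, transpose_hatMatrix,
      hatMatrix_mul_hatMatrix hXX, trace_hatMatrix hXX]
    simp
  have htrace : EPPT.trace = ∫ ω, (P ω * (P ω)ᵀ).trace ∂μ := by
    simp only [trace, diag, hEPPT]
    rw [integral_finsetSum _ fun i _ => hPPTint i i]
  have hp_le : (p : ℝ) ≤ ∫ ω, (P ω * (P ω)ᵀ).trace ∂μ := by
    calc (p : ℝ) = ∫ _, (p : ℝ) ∂μ := by simp
      _ ≤ ∫ ω, (P ω * (P ω)ᵀ).trace ∂μ := by
        refine integral_mono_ae (integrable_const _)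
          (integrable_finsetSum _ fun i _ => hPPTint i i) ?_
        filter_upwards [hP_fix] with ω hω
        simpa using card_le_trace_mul_transpose_of_mul_eq hXX hω
  refine ⟨?_, hrisk_hat, ?_⟩
  · rw [hrisk_tilde, hrisk_hat, trace_sub, htrace, trace_hatMatrix hXX]
    simp only [Fintype.card_fin]
    ring
  · rw [hrisk_tilde, hrisk_hat]
    gcongr

/-- total predictive risk conditioned on rank preservation:
if `rank(S(ω)X) = p` almost surely and `ε` (mean zero, covariance `σ²I`) is
independent of `S`, then with `y = Xβ₀ + ε`, `ỹ = P y`, `ŷ = P_X y`,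
`Risk(ỹ, Xβ₀) = E‖ỹ - Xβ₀‖₂² = Risk(ŷ, Xβ₀) + σ² trace(E[PPᵀ] - P_X)`, and
consequently `Risk(ỹ, Xβ₀) ≥ Risk(ŷ, Xβ₀) = σ² p`. -/
theorem total_predictive_risk_rank_preserved
    {n p r : ℕ} (X : Matrix (Fin n) (Fin p) ℝ) (hX : X.rank = p)
    (hpr : p ≤ r) (hrn : r ≤ n)
    (PX : Matrix (Fin n) (Fin n) ℝ) (hPX : PX = X * (Xᵀ * X)⁻¹ * Xᵀ)
    {Ω : Type*} [MeasurableSpace Ω] (μ : Measure Ω) [IsProbabilityMeasure μ]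
    (S : Ω → Matrix (Fin r) (Fin n) ℝ)
    (Y : Ω → Matrix (Fin p) (Fin r) ℝ)
    (hp1 : ∀ ω, (S ω * X) * Y ω * (S ω * X) = S ω * X)
    (hp2 : ∀ ω, Y ω * ((S ω * X) * Y ω) = Y ω)
    (hp3 : ∀ ω, ((S ω * X) * Y ω)ᵀ = (S ω * X) * Y ω)
    (hp4 : ∀ ω, (Y ω * (S ω * X))ᵀ = Y ω * (S ω * X))
    (hrank : ∀ᵐ ω ∂μ, (S ω * X).rank = p)
    (P : Ω → Matrix (Fin n) (Fin n) ℝ) (hP : ∀ ω, P ω = X * Y ω * S ω)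
    (β₀ : Fin p → ℝ) (σ : ℝ) (hσ : 0 < σ) (ε : Ω → Fin n → ℝ)
    (hindep : ProbabilityTheory.IndepFun ε
      ((fun ω i j => S ω i j) : Ω → Fin r → Fin n → ℝ) μ)
    (hεL2 : ∀ i, MemLp (fun ω => ε ω i) 2 μ)
    (hεmean : ∀ i, ∫ ω, ε ω i ∂μ = 0)
    (hεcov : ∀ i j, ∫ ω, ε ω i * ε ω j ∂μ = if i = j then σ ^ 2 else 0)
    (hYSL2 : ∀ i j, MemLp (fun ω => (Y ω * S ω) i j) 2 μ)
    (hPPTint : ∀ i j, Integrable (fun ω => (P ω * (P ω)ᵀ) i j) μ)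
    (EPPT : Matrix (Fin n) (Fin n) ℝ)
    (hEPPT : ∀ i j, EPPT i j = ∫ ω, (P ω * (P ω)ᵀ) i j ∂μ)
    (y : Ω → Fin n → ℝ) (hy : ∀ ω, y ω = X *ᵥ β₀ + ε ω)
    (ytilde : Ω → Fin n → ℝ) (hytilde : ∀ ω, ytilde ω = P ω *ᵥ y ω)
    (yhat : Ω → Fin n → ℝ) (hyhat : ∀ ω, yhat ω = PX *ᵥ y ω)
    (hriskt : Integrable (fun ω => ∑ i, (ytilde ω i - (X *ᵥ β₀) i) ^ 2) μ)
    (hriskh : Integrable (fun ω => ∑ i, (yhat ω i - (X *ᵥ β₀) i) ^ 2) μ) :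
    (∫ ω, ∑ i, (ytilde ω i - (X *ᵥ β₀) i) ^ 2 ∂μ) =
      (∫ ω, ∑ i, (yhat ω i - (X *ᵥ β₀) i) ^ 2 ∂μ) +
        σ ^ 2 * (EPPT - PX).trace ∧
    (∫ ω, ∑ i, (yhat ω i - (X *ᵥ β₀) i) ^ 2 ∂μ) = σ ^ 2 * p ∧
    (∫ ω, ∑ i, (yhat ω i - (X *ᵥ β₀) i) ^ 2 ∂μ) ≤
      ∫ ω, ∑ i, (ytilde ω i - (X *ᵥ β₀) i) ^ 2 ∂μ :=
  total_predictive_risk_rank_preserved_general X hX PX hPX μ S Y hp1 hp3 hrank P hP β₀ σ ε hindep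
    hεL2 hεcov hYSL2 hPPTint EPPT hEPPT y hy ytilde hytilde yhat hyhat
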